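/- arXiv:2307.10999 — 2 statements merged into one kernel-verified Lean document; each statement's English description precedes it below -/
import Mathlib

section
/- Let d, P, k ≥ 1 be integers with k ≤ d, let 0 < α ≤ 1, and let C be an integer with C ≥ max(8Pk, 8k/(Pα)). For the random count-mean sketch with parameters (P, C), every z ∈ ℝ^d, and every coordinate q ∈ {1,…,d}: P[ ((SᵀSz)_q − z_q)² > α·‖z_tail(k)‖²/k ] ≤ 1/4. -/
open MeasureTheory ProbabilityTheory
open scoped ENNReal NNReal

noncomputable section

/-- Uniform probability measure on a finite type. -/
def unifMeasure (α : Type*) [Fintype α] [MeasurableSpace α] : Measure α :=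
  (Fintype.card α : ℝ≥0∞)⁻¹ • Measure.count

/-- Randomness of a count-mean sketch with parameters `(P, C)` on `ℝ^d`:
for each `p : Fin P` a hash function `h_p : Fin d → Fin C` and sign bits `s_p : Fin d → Bool`,
all mutually independent and uniform (hence jointly: the uniform measure on this type). -/
abbrev SketchSpace (d P C : ℕ) : Type :=
  (Fin P → Fin d → Fin C) × (Fin P → Fin d → Bool)

/-- Sign associated to a boolean. -/
def sgn (b : Bool) : ℝ := if b then 1 else -1

/-- The count-mean sketch `S z ∈ ℝ^{P×C}`:
`(S z)_{(p,c)} = (1/√P) ∑ i, s_p(i)·1[h_p(i)=c]·z_i`. -/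
def Sk {d P C : ℕ} (ω : SketchSpace d P C) (z : Fin d → ℝ) : Fin P × Fin C → ℝ :=
  fun pc => (Real.sqrt P)⁻¹ *
    ∑ i : Fin d, sgn (ω.2 pc.1 i) * (if ω.1 pc.1 i = pc.2 then (1 : ℝ) else 0) * z i

/-- `Sᵀ y ∈ ℝ^d`: `(Sᵀ y)_q = (1/√P) ∑ p, s_p(q)·y_{(p, h_p(q))}`. -/
def SkT {d P C : ℕ} (ω : SketchSpace d P C) (y : Fin P × Fin C → ℝ) : Fin d → ℝ :=
  fun q => (Real.sqrt P)⁻¹ * ∑ p : Fin P, sgn (ω.2 p q) * y (p, ω.1 p q)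

/-- Euclidean (ℓ₂) norm on `ℝ^d`. -/
def norm2 {d : ℕ} (z : Fin d → ℝ) : ℝ := Real.sqrt (∑ i, (z i) ^ 2)

/-- `w` has at most `k` nonzero coordinates. -/
def sparse {d : ℕ} (k : ℕ) (w : Fin d → ℝ) : Prop :=
  ∃ I : Finset (Fin d), I.card ≤ k ∧ ∀ i ∉ I, w i = 0

/-- The tail norm `‖z_tail(k)‖`: the minimum of `‖z - w‖₂` over `k`-sparse `w`. -/
def tailNorm {d : ℕ} (k : ℕ) (z : Fin d → ℝ) : ℝ :=
  sInf {t : ℝ | ∃ w : Fin d → ℝ, sparse k w ∧ t = norm2 (fun i => z i - w i)}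

/-- `w` is a top-`m` truncation of `v`: it keeps the entries of `v` on a set `I` of `m`
coordinates of largest absolute value and zeroes out the rest. -/
def IsTopTrunc {d : ℕ} (m : ℕ) (v w : Fin d → ℝ) : Prop :=
  ∃ I : Finset (Fin d), I.card = m ∧ (∀ i ∈ I, ∀ j ∉ I, |v j| ≤ |v i|) ∧
    (∀ i ∈ I, w i = v i) ∧ ∀ i ∉ I, w i = 0

/-- Symmetric median: the midpoint of the `⌈R/2⌉`-th and `(⌊R/2⌋+1)`-th smallest entries. -/
def med {R : ℕ} (x : Fin R → ℝ) : ℝ :=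
  if h : R = 0 then 0
  else (x (Tuple.sort x ⟨(R + 1) / 2 - 1, by omega⟩) + x (Tuple.sort x ⟨R / 2, by omega⟩)) / 2

/-- Randomness of a count-median-of-means sketch: `R` independent count-mean sketches. -/
abbrev MoMSpace (d P C R : ℕ) : Type := Fin R → SketchSpace d P C

/-- Median-of-means unsketching: `U(y)_q = med_r ((S^{(r)})ᵀ y^{(r)})_q`. -/
def MoMU {d P C R : ℕ} (ω : MoMSpace d P C R) (y : Fin R → Fin P × Fin C → ℝ) : Fin d → ℝ :=
  fun q => med fun r => SkT (ω r) (y r) q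


/-!
Let `I` be a set of `k` coordinates of `z` of largest absolute value. The error
`(SᵀSz)_q - z_q` is `(1/P) ∑_p ∑_{i ≠ q} s_p(q) s_p(i) [h_p(i) = h_p(q)] z_i`. Since `C ≥ 8Pk`,
a union bound shows that with probability at least `7/8` no coordinate of `I ∖ {q}` shares a
bucket with `q`, and then only the light coordinates `T = Iᶜ ∖ {q}` contribute. The random signs
make these contributions orthogonal, so the light error has second moment
`(1/(PC)) ∑_{i ∈ T} z_i² ≤ ‖z_tail(k)‖² / (PC)`, and Markov's inequality together with
`C ≥ 8k/(Pα)` bounds the probability that its square exceeds `α‖z_tail(k)‖²/k` by `1/8`.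
-/

open Finset

theorem sgn_mul_self (b : Bool) : sgn b * sgn b = 1 := by cases b <;> simp [sgn]

theorem sgn_not (b : Bool) : sgn (!b) = -sgn b := by cases b <;> simp [sgn]

theorem Fintype.sum_eq_zero_of_comp_perm_eq_neg {Ω : Type*} [Fintype Ω] (σ : Equiv.Perm Ω)
    (f : Ω → ℝ) (h : ∀ ω, f (σ ω) = -f ω) : ∑ ω, f ω = 0 := by
  have := Equiv.sum_comp σ f
  simp only [h, sum_neg_distrib] at this
  linarith

section SignFlip

variable {α β : Type*} [DecidableEq α] [DecidableEq β]

def flipAt (a : α) (b : β) : Equiv.Perm (α → β → Bool) :=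
  Function.Involutive.toPerm (fun s x y => if x = a ∧ y = b then !s x y else s x y) fun s => by
    funext x y
    by_cases h : x = a ∧ y = b <;> simp [h]

theorem flipAt_apply (a : α) (b : β) (s : α → β → Bool) (x : α) (y : β) :
    flipAt a b s x y = if x = a ∧ y = b then !s x y else s x y :=
  rfl

theorem flipAt_apply_self (a : α) (b : β) (s : α → β → Bool) : flipAt a b s a b = !s a b := by
  simp [flipAt_apply]

theorem flipAt_apply_of_ne {a x : α} {b y : β} (h : x ≠ a ∨ y ≠ b) (s : α → β → Bool) :
    flipAt a b s x y = s x y := by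
  rw [flipAt_apply, if_neg (by tauto)]

variable [Fintype α] [Fintype β]

theorem sum_sgn_mul_sgn_orthogonal {q : β} {u v : α × β} (hu : u.2 ≠ q) (hv : v.2 ≠ q) :
    ∑ s : α → β → Bool, sgn (s u.1 q) * sgn (s u.1 u.2) * (sgn (s v.1 q) * sgn (s v.1 v.2)) =
      if u = v then (Fintype.card (α → β → Bool) : ℝ) else 0 := by
  obtain ⟨p, i⟩ := u
  obtain ⟨p', i'⟩ := v
  dsimp only at hu hv ⊢
  split_ifs with h
  · obtain ⟨rfl, rfl⟩ := Prod.ext_iff.mp h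
    simp [mul_mul_mul_comm, sgn_mul_self]
  · rcases eq_or_ne p p' with rfl | hp
    · have hii' : i ≠ i' := fun h' => h (by rw [h'])
      refine Fintype.sum_eq_zero_of_comp_perm_eq_neg (flipAt p i) _ fun s => ?_
      rw [flipAt_apply_of_ne (.inr hu.symm), flipAt_apply_of_ne (.inr hii'.symm),
        flipAt_apply_self, sgn_not]
      ring
    · refine Fintype.sum_eq_zero_of_comp_perm_eq_neg (flipAt p q) _ fun s => ?_
      rw [flipAt_apply_of_ne (.inr hu), flipAt_apply_of_ne (.inl hp.symm),
        flipAt_apply_of_ne (.inl hp.symm), flipAt_apply_self, sgn_not]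
      ring

end SignFlip

theorem sum_sq_sum_mul_of_orthogonal {ι Ω : Type*} [Fintype Ω] [DecidableEq ι] (U : Finset ι)
    (a : ι → ℝ) (ε : ι → Ω → ℝ) (c : ℝ)
    (hε : ∀ u ∈ U, ∀ v ∈ U, ∑ ω, ε u ω * ε v ω = if u = v then c else 0) :
    ∑ ω, (∑ u ∈ U, a u * ε u ω) ^ 2 = c * ∑ u ∈ U, a u ^ 2 := by
  calc ∑ ω, (∑ u ∈ U, a u * ε u ω) ^ 2
      = ∑ ω, ∑ u ∈ U, ∑ v ∈ U, a u * a v * (ε u ω * ε v ω) := by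
        refine sum_congr rfl fun ω _ => ?_
        rw [sq, sum_mul_sum]
        exact sum_congr rfl fun u _ => sum_congr rfl fun v _ => by ring
    _ = ∑ u ∈ U, ∑ v ∈ U, a u * a v * ∑ ω, ε u ω * ε v ω := by
        rw [sum_comm]
        refine sum_congr rfl fun u _ => ?_
        rw [sum_comm]
        simp only [mul_sum]
    _ = c * ∑ u ∈ U, a u ^ 2 := by
        rw [mul_sum]
        refine sum_congr rfl fun u hu => ?_
        simp [sum_congr rfl fun v hv => congrArg _ (hε u hu v hv), hu, sq, mul_comm]

theorem card_filter_apply_eq_apply_mul {ι κ : Type*} [Fintype ι] [DecidableEq ι] [Fintype κ]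
    [DecidableEq κ] {a b : ι} (hab : a ≠ b) :
    #{f : ι → κ | f a = f b} * Fintype.card κ = Fintype.card (ι → κ) := by
  have hcard := Fintype.card_congr (Equiv.funSplitAt a κ)
  rw [Fintype.card_prod] at hcard
  rw [hcard, card_filter, ← (Equiv.funSplitAt a κ).symm.sum_comp, Fintype.sum_prod_type_right]
  simp [Equiv.funSplitAt_symm_apply, hab.symm, mul_comm]

theorem card_filter_apply_apply_eq_apply_mul {α β κ : Type*} [Fintype α] [DecidableEq α]
    [Fintype β] [DecidableEq β] [Fintype κ] [DecidableEq κ] (a : α) {b b' : β} (hb : b ≠ b') :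
    #{h : α → β → κ | h a b = h a b'} * Fintype.card κ = Fintype.card (α → β → κ) := by
  rw [card_filter, ← (Equiv.curry α β κ).sum_comp, ← card_filter,
    Fintype.card_congr (Equiv.curry α β κ).symm]
  exact card_filter_apply_eq_apply_mul fun h => hb (congrArg Prod.snd h)

theorem card_filter_exists_apply_apply_eq_mul_le {α β κ : Type*} [Fintype α] [DecidableEq α]
    [Fintype β] [DecidableEq β] [Fintype κ] [DecidableEq κ] {J : Finset β} {b : β}
    (hb : b ∉ J) :
    #{h : α → β → κ | ∃ a, ∃ i ∈ J, h a i = h a b} * Fintype.card κ ≤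
      Fintype.card α * #J * Fintype.card (α → β → κ) := by
  have hsub : ({h : α → β → κ | ∃ a, ∃ i ∈ J, h a i = h a b} : Finset (α → β → κ)) ⊆
      (univ ×ˢ J).biUnion fun u => {h : α → β → κ | h u.1 u.2 = h u.1 b} := by
    intro h
    simp only [mem_filter, mem_univ, true_and, mem_biUnion, mem_product]
    rintro ⟨a, i, hi, hab⟩
    exact ⟨(a, i), by simp [hi], hab⟩
  calc #{h : α → β → κ | ∃ a, ∃ i ∈ J, h a i = h a b} * Fintype.card κ
      ≤ (∑ u ∈ univ ×ˢ J, #{h : α → β → κ | h u.1 u.2 = h u.1 b}) * Fintype.card κ := by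
        gcongr
        exact (card_le_card hsub).trans card_biUnion_le
    _ = ∑ u ∈ univ ×ˢ J, Fintype.card (α → β → κ) := by
        rw [sum_mul]
        refine sum_congr rfl fun u hu => ?_
        exact card_filter_apply_apply_eq_apply_mul _ (ne_of_mem_of_not_mem (mem_product.1 hu).2 hb)
    _ = Fintype.card α * #J * Fintype.card (α → β → κ) := by simp [card_product]

theorem card_filter_lt_le_of_sum_le {Ω : Type*} [Fintype Ω] {f : Ω → ℝ} (hf : ∀ ω, 0 ≤ f ω)
    {t M : ℝ} (ht : 0 ≤ t) (hM : 0 ≤ M) (h : ∑ ω, f ω ≤ t * M) : (#{ω | t < f ω} : ℝ) ≤ M := by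
  rcases ht.eq_or_lt with rfl | ht
  · have hsum : ∑ ω, f ω = 0 := le_antisymm (by simpa using h) (sum_nonneg fun ω _ => hf ω)
    have hf0 (ω : Ω) : f ω = 0 := (sum_eq_zero_iff_of_nonneg fun ω _ => hf ω).1 hsum ω (mem_univ ω)
    simpa [hf0] using hM
  · refine le_of_mul_le_mul_left ?_ ht
    calc t * #{ω | t < f ω} ≤ ∑ ω ∈ {ω | t < f ω}, f ω := by
          rw [mul_comm, ← nsmul_eq_mul]
          exact card_nsmul_le_sum _ _ _ fun ω hω => (mem_filter.1 hω).2.le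
      _ ≤ ∑ ω, f ω := sum_le_sum_of_subset_of_nonneg (subset_univ _) fun ω _ _ => hf ω
      _ ≤ t * M := h

theorem tailNorm_nonneg {d : ℕ} (k : ℕ) (z : Fin d → ℝ) : 0 ≤ tailNorm k z :=
  Real.sInf_nonneg fun _ ⟨_, _, ht⟩ => ht ▸ Real.sqrt_nonneg _

theorem exists_card_le_sum_compl_sq_le_tailNorm_sq {d : ℕ} (k : ℕ) (z : Fin d → ℝ) :
    ∃ I : Finset (Fin d), #I ≤ k ∧ ∑ i ∈ Iᶜ, z i ^ 2 ≤ tailNorm k z ^ 2 := by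
  obtain ⟨I, hI, hImax⟩ := exists_max_image {J : Finset (Fin d) | #J ≤ k}
    (fun J => ∑ i ∈ J, z i ^ 2) ⟨∅, by simp⟩
  have hIk : #I ≤ k := (mem_filter.1 hI).2
  have hcompl (J : Finset (Fin d)) (hJ : #J ≤ k) : ∑ i ∈ Iᶜ, z i ^ 2 ≤ ∑ i ∈ Jᶜ, z i ^ 2 := by
    have := hImax J (by simpa using hJ)
    linarith [sum_compl_add_sum I fun i => z i ^ 2, sum_compl_add_sum J fun i => z i ^ 2]
  refine ⟨I, hIk, (Real.sqrt_le_left (tailNorm_nonneg k z)).1 ?_⟩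
  refine le_csInf ⟨_, 0, ⟨∅, by simp, by simp⟩, rfl⟩ ?_
  rintro _ ⟨w, ⟨J, hJk, hJ⟩, rfl⟩
  refine Real.sqrt_le_sqrt ?_
  calc ∑ i ∈ Iᶜ, z i ^ 2 ≤ ∑ i ∈ Jᶜ, z i ^ 2 := hcompl J hJk
    _ = ∑ i ∈ Jᶜ, (z i - w i) ^ 2 :=
        sum_congr rfl fun i hi => by rw [hJ i (by simpa using hi), sub_zero]
    _ ≤ ∑ i, (z i - w i) ^ 2 :=
        sum_le_sum_of_subset_of_nonneg (subset_univ _) fun i _ _ => sq_nonneg _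

theorem unifMeasure_le_inv_of_mul_card_le {α : Type*} [Fintype α] [MeasurableSpace α]
    [MeasurableSingletonClass α] (s : Set α) [DecidablePred (· ∈ s)] {n : ℕ}
    (h : n * #{x | x ∈ s} ≤ Fintype.card α) : unifMeasure α s ≤ (n : ℝ≥0∞)⁻¹ := by
  rw [unifMeasure, Measure.smul_apply, smul_eq_mul, Measure.count_apply_finite s (Set.toFinite s)]
  have hs : (Set.toFinite s).toFinset = ({x | x ∈ s} : Finset α) := by ext; simp
  rw [hs, ENNReal.le_inv_iff_mul_le, mul_assoc, ← ENNReal.div_eq_inv_mul]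
  refine ENNReal.div_le_of_le_mul ?_
  rw [one_mul, mul_comm]
  exact_mod_cast h

section Sketch

variable {d P C : ℕ}

def collisionError (T : Finset (Fin d)) (z : Fin d → ℝ) (q : Fin d) (ω : SketchSpace d P C) :
    ℝ :=
  (P : ℝ)⁻¹ * ∑ p, ∑ i ∈ T,
    (if ω.1 p i = ω.1 p q then z i else 0) * (sgn (ω.2 p q) * sgn (ω.2 p i))

theorem SkT_Sk_sub_self (hP : P ≠ 0) (ω : SketchSpace d P C) (z : Fin d → ℝ) (q : Fin d) :
    SkT ω (Sk ω z) q - z q = collisionError (univ.erase q) z q ω := by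
  have hrow (p : Fin P) : sgn (ω.2 p q) *
      ∑ i, sgn (ω.2 p i) * (if ω.1 p i = ω.1 p q then (1 : ℝ) else 0) * z i =
      z q + ∑ i ∈ univ.erase q,
        (if ω.1 p i = ω.1 p q then z i else 0) * (sgn (ω.2 p q) * sgn (ω.2 p i)) := by
    rw [← add_sum_erase _ _ (mem_univ q), mul_add, mul_sum, if_pos rfl,
      ← mul_assoc, ← mul_assoc, sgn_mul_self, mul_one, one_mul]
    congr 1
    refine sum_congr rfl fun i _ => ?_
    split_ifs <;> ring
  have hsqrt : (Real.sqrt P)⁻¹ * (Real.sqrt P)⁻¹ = (P : ℝ)⁻¹ := by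
    rw [← mul_inv, Real.mul_self_sqrt (Nat.cast_nonneg P)]
  simp only [SkT, Sk, collisionError]
  simp_rw [mul_left_comm (sgn _) (Real.sqrt (P : ℝ))⁻¹, ← mul_sum, ← mul_assoc, hsqrt, hrow,
    sum_add_distrib, mul_add, sum_const, card_univ, Fintype.card_fin, nsmul_eq_mul]
  field_simp
  ring

theorem collisionError_eq_of_subset {S T : Finset (Fin d)} (hTS : T ⊆ S) {z : Fin d → ℝ}
    {q : Fin d} {ω : SketchSpace d P C} (h : ∀ p, ∀ i ∈ S, ω.1 p i = ω.1 p q → i ∈ T) :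
    collisionError S z q ω = collisionError T z q ω := by
  refine congrArg _ (sum_congr rfl fun p _ => (sum_subset hTS fun i hiS hiT => ?_).symm)
  rw [if_neg fun hpi => hiT (h p i hiS hpi), zero_mul]

theorem sum_sq_collisionError (hP : P ≠ 0) {T : Finset (Fin d)} {q : Fin d} (hq : q ∉ T)
    (z : Fin d → ℝ) :
    P * C * ∑ ω : SketchSpace d P C, collisionError T z q ω ^ 2 =
      Fintype.card (SketchSpace d P C) * ∑ i ∈ T, z i ^ 2 := by
  set a : (Fin P → Fin d → Fin C) → Fin P × Fin d → ℝ :=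
    fun h u => if h u.1 u.2 = h u.1 q then z u.2 else 0
  have hsigns (h : Fin P → Fin d → Fin C) :
      ∑ s : Fin P → Fin d → Bool, collisionError T z q (h, s) ^ 2 =
        (P : ℝ)⁻¹ ^ 2 * (Fintype.card (Fin P → Fin d → Bool) * ∑ u ∈ univ ×ˢ T, a h u ^ 2) := by
    simp only [collisionError, mul_pow, ← mul_sum]
    simp_rw [← sum_product']
    congr 1
    refine sum_sq_sum_mul_of_orthogonal (univ ×ˢ T) (a h)
      (fun u (s : Fin P → Fin d → Bool) => sgn (s u.1 q) * sgn (s u.1 u.2)) _ fun u hu v hv => ?_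
    exact sum_sgn_mul_sgn_orthogonal (ne_of_mem_of_not_mem (mem_product.1 hu).2 hq)
      (ne_of_mem_of_not_mem (mem_product.1 hv).2 hq)
  have hhash (u : Fin P × Fin d) (hu : u ∈ univ ×ˢ T) :
      C * ∑ h : Fin P → Fin d → Fin C, a h u ^ 2 =
        Fintype.card (Fin P → Fin d → Fin C) * z u.2 ^ 2 := by
    simp only [a, ite_pow, zero_pow two_ne_zero]
    rw [sum_ite, sum_const_zero, add_zero, sum_const, nsmul_eq_mul, ← mul_assoc]
    congr 1
    have := card_filter_apply_apply_eq_apply_mul (κ := Fin C) u.1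
      (ne_of_mem_of_not_mem (mem_product.1 hu).2 hq)
    rw [Fintype.card_fin] at this
    exact_mod_cast (mul_comm _ _).trans this
  calc P * C * ∑ ω : SketchSpace d P C, collisionError T z q ω ^ 2
      = P * C * ((P : ℝ)⁻¹ ^ 2 * (Fintype.card (Fin P → Fin d → Bool) *
          ∑ u ∈ univ ×ˢ T, ∑ h, a h u ^ 2)) := by
        rw [Fintype.sum_prod_type]
        simp_rw [hsigns]
        rw [← mul_sum, ← mul_sum, sum_comm]
    _ = (P : ℝ)⁻¹ * Fintype.card (Fin P → Fin d → Bool) *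
          ∑ u ∈ univ ×ˢ T, C * ∑ h, a h u ^ 2 := by
        rw [← mul_sum]
        field_simp
    _ = Fintype.card (SketchSpace d P C) * ∑ i ∈ T, z i ^ 2 := by
        rw [sum_congr rfl hhash, ← mul_sum, sum_product]
        simp only [sum_const, card_univ, Fintype.card_fin, Fintype.card_prod, nsmul_eq_mul]
        push_cast
        field_simp

theorem SkT_Sk_sub_self_eq_collisionError_compl (hP : P ≠ 0) {ω : SketchSpace d P C}
    (z : Fin d → ℝ) {q : Fin d} {I : Finset (Fin d)}
    (hI : ∀ p, ∀ i ∈ I.erase q, ω.1 p i ≠ ω.1 p q) :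
    SkT ω (Sk ω z) q - z q = collisionError (Iᶜ.erase q) z q ω := by
  rw [SkT_Sk_sub_self hP]
  refine collisionError_eq_of_subset (erase_subset_erase q (subset_univ _)) fun p i hi hpi => ?_
  have hiq := (mem_erase.1 hi).1
  by_contra hiI
  exact hI p i (mem_erase.2 ⟨hiq, by simpa [hiq] using hiI⟩) hpi

theorem card_lt_sq_SkT_Sk_sub_self_le (hP : P ≠ 0) (z : Fin d → ℝ) (q : Fin d)
    (I : Finset (Fin d)) (t : ℝ) :
    #{ω : SketchSpace d P C | t < (SkT ω (Sk ω z) q - z q) ^ 2} ≤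
      #{ω : SketchSpace d P C | ∃ p, ∃ i ∈ I.erase q, ω.1 p i = ω.1 p q} +
        #{ω : SketchSpace d P C | t < collisionError (Iᶜ.erase q) z q ω ^ 2} := by
  refine (card_le_card fun ω hω => ?_).trans (card_union_le _ _)
  simp only [mem_union, mem_filter, mem_univ, true_and] at hω ⊢
  by_cases hcoll : ∃ p, ∃ i ∈ I.erase q, ω.1 p i = ω.1 p q
  · exact .inl hcoll
  · push Not at hcoll
    exact .inr (SkT_Sk_sub_self_eq_collisionError_compl hP z hcoll ▸ hω)

theorem card_filter_exists_collision_mul_le {J : Finset (Fin d)} {q : Fin d} (hq : q ∉ J) :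
    #{ω : SketchSpace d P C | ∃ p, ∃ i ∈ J, ω.1 p i = ω.1 p q} * C ≤
      P * #J * Fintype.card (SketchSpace d P C) := by
  have hhash := card_filter_exists_apply_apply_eq_mul_le (α := Fin P) (κ := Fin C) hq
  rw [Fintype.card_fin, Fintype.card_fin] at hhash
  rw [← univ_product_univ,
    filter_product_left (fun h : Fin P → Fin d → Fin C => ∃ p, ∃ i ∈ J, h p i = h p q),
    card_product, Fintype.card_prod, card_univ]
  calc _ = #{h : Fin P → Fin d → Fin C | ∃ p, ∃ i ∈ J, h p i = h p q} * C *
        Fintype.card (Fin P → Fin d → Bool) := by ring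
    _ ≤ _ := by rw [← mul_assoc]; convert Nat.mul_le_mul_right _ hhash

theorem mul_card_filter_exists_collision_le {J : Finset (Fin d)} {q : Fin d} (hq : q ∉ J)
    {k m : ℕ} (hJ : #J ≤ k) (hPk : 0 < P * k) (hC : m * P * k ≤ C) :
    m * #{ω : SketchSpace d P C | ∃ p, ∃ i ∈ J, ω.1 p i = ω.1 p q} ≤
      Fintype.card (SketchSpace d P C) := by
  refine Nat.le_of_mul_le_mul_right ?_ hPk
  calc _ = #{ω : SketchSpace d P C | ∃ p, ∃ i ∈ J, ω.1 p i = ω.1 p q} * (m * P * k) := by ring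
    _ ≤ #{ω : SketchSpace d P C | ∃ p, ∃ i ∈ J, ω.1 p i = ω.1 p q} * C :=
        Nat.mul_le_mul_left _ hC
    _ ≤ P * #J * Fintype.card (SketchSpace d P C) := card_filter_exists_collision_mul_le hq
    _ ≤ Fintype.card (SketchSpace d P C) * (P * k) := by rw [mul_comm (Fintype.card _)]; gcongr

theorem mul_card_lt_sq_collisionError_le (hP : P ≠ 0) (hC : C ≠ 0) {T : Finset (Fin d)}
    {q : Fin d} (hq : q ∉ T) (z : Fin d → ℝ) {α τ : ℝ} {k m : ℕ} (hα : 0 < α) (hk : 0 < k)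
    (hm : 0 < m) (hτ : ∑ i ∈ T, z i ^ 2 ≤ τ ^ 2) (hCα : m * k ≤ P * C * α) :
    m * #{ω : SketchSpace d P C | α * τ ^ 2 / k < collisionError T z q ω ^ 2} ≤
      Fintype.card (SketchSpace d P C) := by
  set N := Fintype.card (SketchSpace d P C)
  have hMarkov : (#{ω : SketchSpace d P C | α * τ ^ 2 / k < collisionError T z q ω ^ 2} : ℝ) ≤
      N / m := by
    refine card_filter_lt_le_of_sum_le (fun ω => sq_nonneg _) (by positivity) (by positivity) ?_
    have hPC : (0 : ℝ) < P * C := by positivity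
    refine le_of_mul_le_mul_left ?_ hPC
    rw [sum_sq_collisionError hP hq]
    calc (N : ℝ) * ∑ i ∈ T, z i ^ 2 ≤ N * τ ^ 2 := by gcongr
      _ ≤ N * τ ^ 2 * (P * C * α / (m * k)) := by
          refine le_mul_of_one_le_right (by positivity) ?_
          rw [one_le_div (by positivity)]
          exact_mod_cast hCα
      _ = P * C * (α * τ ^ 2 / k * (N / m)) := by field_simp
  have hm' : (0 : ℝ) < m := by exact_mod_cast hm
  exact_mod_cast (le_div_iff₀' hm').1 hMarkov

theorem count_mean_sketch_coordinate_deviation_general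
    {d P k : ℕ} (hP : 1 ≤ P) (hk : 1 ≤ k)
    {α : ℝ} (hα0 : 0 < α)
    {C : ℕ} (hC : max (8 * P * k : ℝ) (8 * k / (P * α)) ≤ (C : ℝ))
    (z : Fin d → ℝ) (q : Fin d) :
    unifMeasure (SketchSpace d P C)
        {ω | α * tailNorm k z ^ 2 / k < (SkT ω (Sk ω z) q - z q) ^ 2} ≤ 1 / 4 := by
  classical
  obtain ⟨I, hIk, hItail⟩ := exists_card_le_sum_compl_sq_le_tailNorm_sq k z
  have hP0 : P ≠ 0 := by omega
  have hCk : 8 * P * k ≤ C := by exact_mod_cast (le_max_left _ _).trans hC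
  have hC0 : C ≠ 0 := (lt_of_lt_of_le (by positivity) hCk).ne'
  have hCα : ((8 : ℕ) : ℝ) * k ≤ P * C * α := by
    have := (le_max_right _ _).trans hC
    rw [div_le_iff₀ (by positivity)] at this
    push_cast
    linarith
  have hheavy := mul_card_filter_exists_collision_le (notMem_erase q I)
    (card_erase_le.trans hIk) (by positivity) hCk
  have hlight := mul_card_lt_sq_collisionError_le hP0 hC0 (notMem_erase q Iᶜ) z hα0 hk
    (by norm_num) ((sum_le_sum_of_subset_of_nonneg (erase_subset _ _)
      fun _ _ _ => sq_nonneg _).trans hItail) hCα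
  refine (unifMeasure_le_inv_of_mul_card_le (n := 4) _ ?_).trans_eq (by norm_num)
  have hsplit := card_lt_sq_SkT_Sk_sub_self_le (C := C) hP0 z q I (α * tailNorm k z ^ 2 / k)
  exact (Nat.mul_le_mul_left 4 hsplit).trans (by omega)

/-- per-coordinate deviation bound for the count-mean sketch:
if `C ≥ max(8Pk, 8k/(Pα))` then each coordinate estimate deviates (squared) by more
than `α‖z_tail(k)‖²/k` with probability at most `1/4`. -/
theorem count_mean_sketch_coordinate_deviation
    {d P k : ℕ} (hd : 1 ≤ d) (hP : 1 ≤ P) (hk : 1 ≤ k) (hkd : k ≤ d)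
    {α : ℝ} (hα0 : 0 < α) (hα1 : α ≤ 1)
    {C : ℕ} (hC : max (8 * P * k : ℝ) (8 * k / (P * α)) ≤ (C : ℝ))
    (z : Fin d → ℝ) (q : Fin d) :
    unifMeasure (SketchSpace d P C)
        {ω | α * tailNorm k z ^ 2 / k < (SkT ω (Sk ω z) q - z q) ^ 2} ≤ 1 / 4 :=
  count_mean_sketch_coordinate_deviation_general hP hk hα0 hC z q
end Sketch
end
end

section
/- Let G > 0, 0 < τ ≤ 1/2, and n ≥ 1. Let D₁ be the probability measure on ℝ with D₁({G}) = (1+τ)/2 and D₁({−G}) = (1−τ)/2, and let D₂ be the probability measure with D₂({G}) = (1−τ)/2 and D₂({−G}) = (1+τ)/2. Then the total variation distance between the n-fold product measures satisfies TV(D₁^{⊗n}, D₂^{⊗n})² ≤ 1 − exp(−3nτ²). -/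
open MeasureTheory ProbabilityTheory
open scoped ENNReal NNReal

noncomputable section

/-- Total variation distance `TV(P,Q) = sup_A |P(A) − Q(A)|` over measurable sets. -/
def TVdist {γ : Type*} [MeasurableSpace γ] (P Q : Measure γ) : ℝ :=
  ⨆ A : {A : Set γ // MeasurableSet A}, |(P A.1).toReal - (Q A.1).toReal|

/-!
Both product measures are push-forwards of product measures on `Bool ^ n` under the sign
pattern `c ↦ ±G`, and push-forward does not increase total variation. On a finite space
Le Cam's inequality `TV² ≤ 1 - BC²` bounds the total variation through the Bhattacharyya
coefficient `BC = ∑ √(P{i} Q{i})`, which is multiplicative over products. For one coordinate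
`BC = 2 √((1 + τ)/2 · (1 - τ)/2) = √(1 - τ²)`, so `TV² ≤ 1 - (1 - τ²) ^ n`, and
`1 - x ≥ exp (-3x)` for `0 ≤ x ≤ 2/3` (from `(1 - x)(1 + 3x) ≥ 1`).
-/

open Finset

section TotalVariation

variable {γ : Type*} [MeasurableSpace γ]

lemma TVdist_nonneg (P Q : Measure γ) : 0 ≤ TVdist P Q :=
  Real.iSup_nonneg fun _ => abs_nonneg _

lemma abs_measureReal_sub_le_TVdist (P Q : Measure γ) [IsFiniteMeasure P] [IsFiniteMeasure Q]
    {A : Set γ} (hA : MeasurableSet A) : |P.real A - Q.real A| ≤ TVdist P Q := by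
  refine le_ciSup (f := fun A : {A : Set γ // MeasurableSet A} => |P.real A.1 - Q.real A.1|)
    ⟨P.real .univ + Q.real .univ, ?_⟩ ⟨A, hA⟩
  rintro _ ⟨B, rfl⟩
  exact abs_sub_le_of_nonneg_of_le measureReal_nonneg
    ((measureReal_mono B.1.subset_univ).trans (le_add_of_nonneg_right measureReal_nonneg))
    measureReal_nonneg
    ((measureReal_mono B.1.subset_univ).trans (le_add_of_nonneg_left measureReal_nonneg))

lemma TVdist_map_le {δ : Type*} [MeasurableSpace δ] (P Q : Measure γ) [IsFiniteMeasure P]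
    [IsFiniteMeasure Q] {f : γ → δ} (hf : Measurable f) :
    TVdist (P.map f) (Q.map f) ≤ TVdist P Q :=
  Real.iSup_le (fun A => by
    simpa only [measureReal_def, Measure.map_apply hf A.2] using
      abs_measureReal_sub_le_TVdist P Q (hf A.2)) (TVdist_nonneg P Q)

end TotalVariation

section Finite

variable {ι : Type*} [Fintype ι]

lemma abs_sum_sub_le_half_sum_abs_sub {p q : ι → ℝ} (hpq : ∑ i, p i = ∑ i, q i)
    (B : Finset ι) : |∑ i ∈ B, (p i - q i)| ≤ (1 / 2) * ∑ i, |p i - q i| := by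
  classical
  have hcompl : ∑ i ∈ Bᶜ, (p i - q i) = -∑ i ∈ B, (p i - q i) := by
    rw [eq_neg_iff_add_eq_zero, add_comm, sum_add_sum_compl, sum_sub_distrib, hpq, sub_self]
  have hB := abs_sum_le_sum_abs (fun i => p i - q i) B
  have hBc := abs_sum_le_sum_abs (fun i => p i - q i) Bᶜ
  rw [hcompl, abs_neg] at hBc
  linarith [sum_add_sum_compl B fun i => |p i - q i|]

/-- Le Cam's inequality. -/
lemma half_sum_abs_sub_sq_le_one_sub_sq {p q : ι → ℝ} (hp : ∀ i, 0 ≤ p i) (hq : ∀ i, 0 ≤ q i)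
    (hp1 : ∑ i, p i = 1) (hq1 : ∑ i, q i = 1) :
    ((1 / 2) * ∑ i, |p i - q i|) ^ 2 ≤ 1 - (∑ i, √(p i * q i)) ^ 2 := by
  set t := (1 / 2) * ∑ i, |p i - q i|
  have hsum : ∑ i, min (p i) (q i) + ∑ i, max (p i) (q i) = 2 := by
    rw [← sum_add_distrib]
    simp only [min_add_max]
    rw [sum_add_distrib, hp1, hq1]
    norm_num
  have hdiff : ∑ i, max (p i) (q i) - ∑ i, min (p i) (q i) = 2 * t := by
    simp only [t, ← sum_sub_distrib, max_sub_min_eq_abs']; ring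
  have hcs : ∑ i, √(p i * q i) ≤ √(1 - t) * √(1 + t) := by
    calc ∑ i, √(p i * q i) = ∑ i, √(min (p i) (q i)) * √(max (p i) (q i)) := by
          simp only [← Real.sqrt_mul (le_min (hp _) (hq _)), min_mul_max]
      _ ≤ √(∑ i, min (p i) (q i)) * √(∑ i, max (p i) (q i)) :=
          Real.sum_sqrt_mul_sqrt_le _ (fun i => le_min (hp i) (hq i))
            (fun i => (hp i).trans (le_max_left _ _))
      _ = √(1 - t) * √(1 + t) := by congr 2 <;> linarith
  have hnonneg : 0 ≤ ∑ i, √(p i * q i) := sum_nonneg fun _ _ => Real.sqrt_nonneg _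
  have ht0 : 0 ≤ t := by positivity
  have ht : t ≤ 1 := by linarith [sum_nonneg fun i (_ : i ∈ univ) => le_min (hp i) (hq i)]
  have := pow_le_pow_left₀ hnonneg hcs 2
  rw [mul_pow, Real.sq_sqrt (by linarith), Real.sq_sqrt (by linarith)] at this
  nlinarith

variable [MeasurableSpace ι]

def bhattacharyya (P Q : Measure ι) : ℝ := ∑ i, √(P.real {i} * Q.real {i})

lemma bhattacharyya_pi {κ : Type*} [Fintype κ] [DecidableEq κ] (P Q : κ → Measure ι)
    [∀ k, SigmaFinite (P k)] [∀ k, SigmaFinite (Q k)] :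
    bhattacharyya (Measure.pi P) (Measure.pi Q) = ∏ k, bhattacharyya (P k) (Q k) := by
  simp only [bhattacharyya, Fintype.prod_sum]
  refine sum_congr rfl fun x _ => ?_
  simp only [measureReal_def, Measure.pi_singleton, ENNReal.toReal_prod, ← prod_mul_distrib]
  exact Real.sqrt_prod _ fun k _ => by positivity

variable [MeasurableSingletonClass ι]

lemma TVdist_le_half_sum_abs_sub (P Q : Measure ι) [IsFiniteMeasure P] [IsFiniteMeasure Q]
    (hPQ : P .univ = Q .univ) :
    TVdist P Q ≤ (1 / 2) * ∑ i, |P.real {i} - Q.real {i}| := by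
  classical
  refine Real.iSup_le (fun A => ?_) (by positivity)
  have hA : A.1 = ↑(univ.filter (· ∈ A.1)) := by ext; simp
  rw [← measureReal_def, ← measureReal_def, hA, ← sum_measureReal_singleton,
    ← sum_measureReal_singleton, ← sum_sub_distrib]
  refine abs_sum_sub_le_half_sum_abs_sub ?_ _
  rw [sum_measureReal_singleton, sum_measureReal_singleton, coe_univ, measureReal_def,
    measureReal_def, hPQ]

lemma TVdist_sq_le_one_sub_bhattacharyya_sq (P Q : Measure ι) [IsProbabilityMeasure P]
    [IsProbabilityMeasure Q] : TVdist P Q ^ 2 ≤ 1 - bhattacharyya P Q ^ 2 := by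
  have hsum (R : Measure ι) [IsProbabilityMeasure R] : ∑ i, R.real {i} = 1 := by
    rw [sum_measureReal_singleton, coe_univ, probReal_univ]
  calc TVdist P Q ^ 2 ≤ ((1 / 2) * ∑ i, |P.real {i} - Q.real {i}|) ^ 2 :=
        pow_le_pow_left₀ (TVdist_nonneg P Q)
          (TVdist_le_half_sum_abs_sub P Q (by simp only [measure_univ])) 2
    _ ≤ 1 - bhattacharyya P Q ^ 2 :=
        half_sum_abs_sub_sq_le_one_sub_sq (fun _ => measureReal_nonneg)
          (fun _ => measureReal_nonneg) (hsum P) (hsum Q)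

end Finite

lemma Real.exp_neg_three_mul_le_one_sub {x : ℝ} (hx0 : 0 ≤ x) (hx : x ≤ 2 / 3) :
    Real.exp (-(3 * x)) ≤ 1 - x := by
  rw [Real.exp_neg, inv_le_iff_one_le_mul₀ (Real.exp_pos _)]
  calc (1 : ℝ) ≤ (1 - x) * (1 + 3 * x) := by nlinarith
    _ ≤ (1 - x) * Real.exp (3 * x) := by
      gcongr
      · linarith
      · linarith [Real.add_one_le_exp (3 * x)]

section TwoPoint

def boolMeasure (a b : ℝ) : Measure Bool :=
  ENNReal.ofReal a • Measure.dirac true + ENNReal.ofReal b • Measure.dirac false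

variable {a b : ℝ}

lemma boolMeasure_real_singleton (ha : 0 ≤ a) (hb : 0 ≤ b) (c : Bool) :
    (boolMeasure a b).real {c} = bif c then a else b := by
  cases c <;> simp [boolMeasure, measureReal_def, ha, hb]

lemma isProbabilityMeasure_boolMeasure (ha : 0 ≤ a) (hb : 0 ≤ b) (hab : a + b = 1) :
    IsProbabilityMeasure (boolMeasure a b) :=
  ⟨by simp [boolMeasure, ← ENNReal.ofReal_add ha hb, hab]⟩

lemma map_boolMeasure {α : Type*} [MeasurableSpace α] (a b : ℝ) (x y : α) :
    (boolMeasure a b).map (fun c => bif c then x else y) =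
      ENNReal.ofReal a • Measure.dirac x + ENNReal.ofReal b • Measure.dirac y := by
  have hf : Measurable fun c : Bool => bif c then x else y := measurable_of_countable _
  simp [boolMeasure, Measure.map_add _ _ hf, Measure.map_smul, Measure.map_dirac' hf]

lemma bhattacharyya_boolMeasure_swap (ha : 0 ≤ a) (hb : 0 ≤ b) :
    bhattacharyya (boolMeasure a b) (boolMeasure b a) = 2 * √(a * b) := by
  simp only [bhattacharyya, Fintype.sum_bool, boolMeasure_real_singleton ha hb,
    boolMeasure_real_singleton hb ha, cond_true, cond_false, mul_comm b a]
  ring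

end TwoPoint

theorem tv_product_symmetric_bernoulli_general
    (G τ : ℝ) (n : ℕ) (hτ0 : 0 < τ) (hτ : τ ≤ 1 / 2)
    (D₁ D₂ : Measure ℝ)
    (hD₁ : D₁ = ENNReal.ofReal ((1 + τ) / 2) • Measure.dirac G
              + ENNReal.ofReal ((1 - τ) / 2) • Measure.dirac (-G))
    (hD₂ : D₂ = ENNReal.ofReal ((1 - τ) / 2) • Measure.dirac G
              + ENNReal.ofReal ((1 + τ) / 2) • Measure.dirac (-G)) :
    TVdist (Measure.pi fun _ : Fin n => D₁) (Measure.pi fun _ : Fin n => D₂) ^ 2 ≤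
      1 - Real.exp (-(3 * n * τ ^ 2)) := by
  set a := (1 + τ) / 2
  set b := (1 - τ) / 2
  have ha : 0 ≤ a := by positivity
  have hb : 0 ≤ b := by simp only [b]; linarith
  have := isProbabilityMeasure_boolMeasure ha hb (by ring)
  have := isProbabilityMeasure_boolMeasure hb ha (by ring)
  set g : Bool → ℝ := fun c => bif c then G else -G
  have hpi (ν : Measure Bool) [IsProbabilityMeasure ν] :
      Measure.pi (fun _ : Fin n => ν.map g) = (Measure.pi fun _ => ν).map fun x i => g (x i) :=
    (Measure.pi_map_pi fun _ => (measurable_of_countable g).aemeasurable).symm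
  have hρ : bhattacharyya (boolMeasure a b) (boolMeasure b a) ^ 2 = 1 - τ ^ 2 := by
    rw [bhattacharyya_boolMeasure_swap ha hb, mul_pow, Real.sq_sqrt (by positivity)]
    ring
  calc TVdist (Measure.pi fun _ : Fin n => D₁) (Measure.pi fun _ : Fin n => D₂) ^ 2
      ≤ TVdist (Measure.pi fun _ : Fin n => boolMeasure a b)
          (Measure.pi fun _ : Fin n => boolMeasure b a) ^ 2 := by
        rw [hD₁, hD₂, ← map_boolMeasure, ← map_boolMeasure, hpi, hpi]
        exact pow_le_pow_left₀ (TVdist_nonneg _ _)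
          (TVdist_map_le _ _ (measurable_of_countable _)) 2
    _ ≤ 1 - bhattacharyya (Measure.pi fun _ : Fin n => boolMeasure a b)
          (Measure.pi fun _ : Fin n => boolMeasure b a) ^ 2 :=
        TVdist_sq_le_one_sub_bhattacharyya_sq _ _
    _ = 1 - (1 - τ ^ 2) ^ n := by
        rw [bhattacharyya_pi, prod_const, card_univ, Fintype.card_fin, ← pow_mul, mul_comm,
          pow_mul, hρ]
    _ ≤ 1 - Real.exp (-(3 * n * τ ^ 2)) := by
        rw [show -(3 * n * τ ^ 2) = n * -(3 * τ ^ 2) by ring, Real.exp_nat_mul]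
        gcongr
        exact Real.exp_neg_three_mul_le_one_sub (by positivity) (by nlinarith)

/-- total variation bound between `n`-fold products of the two symmetric
Bernoulli-type measures: `TV(D₁^{⊗n}, D₂^{⊗n})² ≤ 1 − exp(−3nτ²)`. -/
theorem tv_product_symmetric_bernoulli
    (G τ : ℝ) (n : ℕ) (hG : 0 < G) (hτ0 : 0 < τ) (hτ : τ ≤ 1 / 2) (hn : 1 ≤ n)
    (D₁ D₂ : Measure ℝ)
    (hD₁ : D₁ = ENNReal.ofReal ((1 + τ) / 2) • Measure.dirac G
              + ENNReal.ofReal ((1 - τ) / 2) • Measure.dirac (-G))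
    (hD₂ : D₂ = ENNReal.ofReal ((1 - τ) / 2) • Measure.dirac G
              + ENNReal.ofReal ((1 + τ) / 2) • Measure.dirac (-G)) :
    TVdist (Measure.pi fun _ : Fin n => D₁) (Measure.pi fun _ : Fin n => D₂) ^ 2 ≤
      1 - Real.exp (-(3 * n * τ ^ 2)) :=
  tv_product_symmetric_bernoulli_general G τ n hτ0 hτ D₁ D₂ hD₁ hD₂
end
end
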